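/- Let γ_SD = max of N i.i.d. exponential random variables with mean γ̄_D, and γ_I an independent random variable with density f_{γ_I}(x) = 2(k/γ̄_I)^((L+k)/2) x^((L+k)/2-1) K_{L-k}(2√(kx/γ̄_I))/(Γ(L)Γ(k)). Then the CDF of γ_SDout = γ_SD/(1+γ_I) is F(γ) = 1 - Σ_{n=1}^N C(N,n)(-1)^{n+1} e^{-nγ/γ̄_D} (k γ̄_D/(γ̄_I n γ))^((L+k-1)/2) exp(k γ̄_D/(2 γ̄_I n γ)) W_{(1-L-k)/2,(L-k)/2}(k γ̄_D/(γ̄_I n γ)) for γ > 0. -/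

import Mathlib

open MeasureTheory Set

/-- Modified Bessel function of the second kind, via its integral representation. -/
noncomputable def besselK (ν x : ℝ) : ℝ :=
  ∫ t in Ioi (0:ℝ), Real.exp (-x * Real.cosh t) * Real.cosh (ν * t)

/-- The density of the sum of `L` fully correlated squared-K interferers with shape `k`
and mean parameter `γ̄_I`. -/
noncomputable def fcDensity (L k γbar x : ℝ) : ℝ :=
  2 * (k / γbar) ^ ((L + k) / 2) * x ^ ((L + k) / 2 - 1) / (Real.Gamma L * Real.Gamma k) *
    besselK (L - k) (2 * Real.sqrt (k * x / γbar))

/-- The Whittaker `W` function, via its integral representation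
`W_{λ,μ}(z) = e^{-z/2} z^λ / Γ(μ-λ+1/2) ∫₀^∞ e^{-t} t^{μ-λ-1/2} (1+t/z)^{μ+λ-1/2} dt`. -/
noncomputable def whittakerW (lam mu z : ℝ) : ℝ :=
  Real.exp (-z / 2) * z ^ lam / Real.Gamma (mu - lam + 1/2) *
    ∫ t in Ioi (0:ℝ), Real.exp (-t) * t ^ (mu - lam - 1/2) * (1 + t / z) ^ (mu + lam - 1/2)

/-! Expanding `(1 - e^{-(1+x)γ/γ̄_D})^N` binomially reduces the CDF to the Laplace transform of
`f_{γ_I}` at the points `s = nγ/γ̄_D`. With `a = k/γ̄_I`, the identity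
`∫₀^∞ t^{ν-1} e^{-t-b/t} dt = 2 b^{ν/2} K_ν(2√b)` exhibits `f_{γ_I}` as a Gamma(`k`, rate `a/t`)
density in `x` mixed over a Gamma(`L`) weight in `t`. Exchanging the two integrals, the Laplace
transform at `s` is `a^k/Γ(L) ∫₀^∞ t^{L-1} e^{-t} (st+a)^{-k} dt`: this is `1` at `s = 0` and the
integral representation of `W_{(1-L-k)/2,(L-k)/2}(a/s)` for `s > 0`. -/

open Real

theorem sq_div_four_le_cosh (s : ℝ) : s ^ 2 / 4 ≤ cosh s := by
  have hexp : 1 + |s| + |s| ^ 2 / 2 ≤ exp |s| := quadratic_le_exp_of_nonneg (abs_nonneg s)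
  have hexp_neg : 1 - |s| ≤ exp (-|s|) := by linarith [add_one_le_exp (-|s|)]
  rw [← cosh_abs, cosh_eq, ← sq_abs s]
  linarith

theorem integrable_exp_mul_sub_mul_cosh (ν : ℝ) {x : ℝ} (hx : 0 < x) :
    Integrable fun s : ℝ => exp (ν * s - x * cosh s) := by
  refine ((integrable_exp_neg_mul_sq (b := x / 8) (by positivity)).const_mul
    (exp (2 * ν ^ 2 / x))).mono' (by fun_prop) (Filter.Eventually.of_forall fun s => ?_)
  rw [norm_of_nonneg (exp_pos _).le, ← exp_add, exp_le_exp]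
  have hsq : ν * s ≤ 2 * ν ^ 2 / x + x / 8 * s ^ 2 := by
    rw [div_add' _ _ _ hx.ne', le_div_iff₀ hx]
    nlinarith [sq_nonneg (x * s - 4 * ν)]
  nlinarith [sq_div_four_le_cosh s]

theorem integral_exp_mul_sub_mul_cosh (ν : ℝ) {x : ℝ} (hx : 0 < x) :
    ∫ s, exp (ν * s - x * cosh s) = 2 * besselK ν x := by
  rw [← integral_add_compl (measurableSet_Ioi (a := 0)) (integrable_exp_mul_sub_mul_cosh ν hx),
    compl_Ioi, ← neg_zero, ← integral_comp_neg_Ioi, neg_zero,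
    ← integral_add (integrable_exp_mul_sub_mul_cosh ν hx).integrableOn
      (integrable_exp_mul_sub_mul_cosh ν hx).comp_neg.integrableOn,
    besselK, ← integral_const_mul]
  refine setIntegral_congr_fun measurableSet_Ioi fun s _ => ?_
  rw [cosh_neg, cosh_eq (ν * s), mul_neg, neg_mul, sub_eq_add_neg,
    sub_eq_add_neg, exp_add, exp_add]
  ring

theorem integral_Ioi_zero_eq_integral_comp_exp {E : Type*} [NormedAddCommGroup E]
    [NormedSpace ℝ E] (g : ℝ → E) :
    ∫ y in Ioi 0, g y = ∫ x, exp x • g (exp x) := by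
  rw [← range_exp, ← image_univ, integral_image_eq_integral_abs_deriv_smul MeasurableSet.univ
    (fun x _ => (hasDerivAt_exp x).hasDerivWithinAt) exp_injective.injOn, Measure.restrict_univ]
  simp_rw [abs_of_pos (exp_pos _)]

theorem integral_rpow_mul_exp_neg_sub_div (ν : ℝ) {b : ℝ} (hb : 0 < b) :
    ∫ t in Ioi 0, t ^ (ν - 1) * exp (-t - b / t) = 2 * √b ^ ν * besselK ν (2 * √b) := by
  set c := √b
  have hc : 0 < c := sqrt_pos.mpr hb
  -- substitute `t = c eˢ`, which symmetrises `t + b / t` into `2 c cosh s`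
  have hsubst : ∀ s, exp (s + log c) • (exp (s + log c) ^ (ν - 1) *
      exp (-exp (s + log c) - b / exp (s + log c))) = c ^ ν * exp (ν * s - 2 * c * cosh s) := by
    intro s
    rw [exp_add, exp_log hc, mul_comm (exp s), smul_eq_mul, ← mul_assoc,
      mul_comm (c * exp s), ← rpow_add_one (by positivity), sub_add_cancel,
      mul_rpow hc.le (exp_pos s).le, ← exp_mul, mul_assoc, ← exp_add, cosh_eq,
      ← mul_self_sqrt hb.le]
    congr 2
    field_simp
    rw [exp_neg]
    field_simp
    ring
  rw [integral_Ioi_zero_eq_integral_comp_exp,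
    ← integral_add_right_eq_self _ (log c), funext hsubst, integral_const_mul,
    integral_exp_mul_sub_mul_cosh ν (by positivity)]
  ring

theorem fcDensity_eq_integral (L : ℝ) {k γ x : ℝ} (hk : 0 < k) (hγ : 0 < γ) (hx : 0 < x) :
    fcDensity L k γ x = (k / γ) ^ k * x ^ (k - 1) / (Gamma L * Gamma k) *
      ∫ t in Ioi 0, t ^ (L - k - 1) * exp (-t - k / γ * x / t) := by
  have ha : 0 < k / γ := div_pos hk hγ
  have hsqrt : √(k / γ * x) ^ (L - k) = (k / γ) ^ ((L - k) / 2) * x ^ ((L - k) / 2) := by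
    rw [sqrt_eq_rpow, ← rpow_mul (by positivity), one_div_mul_eq_div, mul_rpow ha.le hx.le]
  have hpow_a : (k / γ) ^ ((L + k) / 2) = (k / γ) ^ k * (k / γ) ^ ((L - k) / 2) := by
    rw [← rpow_add ha]; ring_nf
  have hpow_x : x ^ ((L + k) / 2 - 1) = x ^ (k - 1) * x ^ ((L - k) / 2) := by
    rw [← rpow_add hx]; ring_nf
  rw [integral_rpow_mul_exp_neg_sub_div (L - k) (by positivity), hsqrt, fcDensity, hpow_a,
    hpow_x, mul_div_right_comm k x γ]
  ring

theorem rpow_mul_exp_mul_whittakerW (L k : ℝ) {z : ℝ} (hz : 0 < z) :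
    z ^ ((L + k - 1) / 2) * exp (z / 2) * whittakerW ((1 - L - k) / 2) ((L - k) / 2) z =
      (∫ t in Ioi 0, exp (-t) * t ^ (L - 1) * (1 + t / z) ^ (-k)) / Gamma L := by
  rw [whittakerW, show (L - k) / 2 - (1 - L - k) / 2 + 1 / 2 = L by ring,
    show (L - k) / 2 - (1 - L - k) / 2 - 1 / 2 = L - 1 by ring,
    show (L - k) / 2 + (1 - L - k) / 2 - 1 / 2 = -k by ring]
  have hpow : z ^ ((L + k - 1) / 2) * z ^ ((1 - L - k) / 2) = 1 := by
    rw [← rpow_add hz, show (L + k - 1) / 2 + (1 - L - k) / 2 = 0 by ring, rpow_zero]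
  have hexp : exp (z / 2) * exp (-z / 2) = 1 := by
    rw [← exp_add, neg_div, add_neg_cancel, exp_zero]
  linear_combination (∫ t in Ioi 0, exp (-t) * t ^ (L - 1) * (1 + t / z) ^ (-k)) / Gamma L *
    (exp (z / 2) * exp (-z / 2) * hpow + hexp)

section GammaMixture

variable {L k a s : ℝ}

theorem integral_gammaMixture_inner (L : ℝ) (hk : 0 < k) (ha : 0 < a) (hs : 0 ≤ s) {t : ℝ}
    (ht : 0 < t) :
    ∫ x in Ioi 0, t ^ (L - k - 1) * exp (-t) * (x ^ (k - 1) * exp (-((s + a / t) * x))) =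
      Gamma k * (t ^ (L - 1) * exp (-t) * (s * t + a) ^ (-k)) := by
  have hrate : s + a / t = (s * t + a) / t := by field_simp
  rw [integral_const_mul, integral_rpow_mul_exp_neg_mul_Ioi hk (by positivity), hrate,
    one_div_div, div_rpow ht.le (by positivity), div_eq_mul_inv, ← rpow_neg (by positivity),
    show L - 1 = L - k - 1 + k by ring, rpow_add ht]
  ring

theorem integrableOn_rpow_mul_exp_neg_mul_rpow_neg (hL : 0 < L) (hk : 0 ≤ k) (ha : 0 < a)
    (hs : 0 ≤ s) :
    IntegrableOn (fun t => t ^ (L - 1) * exp (-t) * (s * t + a) ^ (-k)) (Ioi 0) := by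
  refine ((GammaIntegral_convergent hL).mul_const (a ^ (-k))).mono' (by fun_prop) ?_
  refine (ae_restrict_iff' measurableSet_Ioi).mpr (Filter.Eventually.of_forall fun t ht => ?_)
  have ht : 0 < t := ht
  rw [norm_of_nonneg (by positivity), mul_comm (exp (-t))]
  exact mul_le_mul_of_nonneg_left (rpow_le_rpow_of_nonpos ha (by nlinarith) (by linarith))
    (by positivity)

theorem integrable_gammaMixture (hL : 0 < L) (hk : 0 < k) (ha : 0 < a) (hs : 0 ≤ s) :
    Integrable (Function.uncurry fun t x =>
        t ^ (L - k - 1) * exp (-t) * (x ^ (k - 1) * exp (-((s + a / t) * x))))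
      ((volume.restrict (Ioi 0)).prod (volume.restrict (Ioi 0))) := by
  rw [integrable_prod_iff (by fun_prop)]
  refine ⟨(ae_restrict_iff' measurableSet_Ioi).mpr (Filter.Eventually.of_forall fun t ht => ?_),
    ?_⟩
  · have := integrableOn_rpow_mul_exp_neg_mul_rpow (p := 1) (s := k - 1) (b := s + a / t)
      (by linarith) one_pos (add_pos_of_nonneg_of_pos hs (div_pos ha ht))
    simp only [rpow_one, neg_mul] at this
    exact this.const_mul (t ^ (L - k - 1) * exp (-t))
  · refine ((integrableOn_rpow_mul_exp_neg_mul_rpow_neg hL hk.le ha hs).const_mul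
      (Gamma k)).congr ((ae_restrict_iff' measurableSet_Ioi).mpr
        (Filter.Eventually.of_forall fun t ht => ?_))
    dsimp only
    rw [← integral_gammaMixture_inner L hk ha hs ht]
    refine setIntegral_congr_fun measurableSet_Ioi fun x hx => ?_
    have ht : 0 < t := ht
    have hx : 0 < x := hx
    exact (norm_of_nonneg (by positivity)).symm

end GammaMixture

section Laplace

variable {L k γ s : ℝ}

theorem exp_neg_mul_mul_fcDensity_ae_eq (hk : 0 < k) (hγ : 0 < γ) :
    (fun x => exp (-(s * x)) * fcDensity L k γ x) =ᵐ[volume.restrict (Ioi 0)] fun x =>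
      (k / γ) ^ k / (Gamma L * Gamma k) * ∫ t in Ioi 0,
        t ^ (L - k - 1) * exp (-t) * (x ^ (k - 1) * exp (-((s + k / γ / t) * x))) := by
  refine (ae_restrict_iff' measurableSet_Ioi).mpr (Filter.Eventually.of_forall fun x hx => ?_)
  have hx : 0 < x := hx
  dsimp only
  rw [fcDensity_eq_integral L hk hγ hx, ← integral_const_mul, ← integral_const_mul,
    ← integral_const_mul]
  refine setIntegral_congr_fun measurableSet_Ioi fun t ht => ?_
  have ht : 0 < t := ht
  rw [show -t - k / γ * x / t = -t + -(k / γ / t * x) by ring, add_mul, neg_add, exp_add,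
    exp_add]
  ring

theorem integrableOn_exp_neg_mul_mul_fcDensity (hL : 0 < L) (hk : 0 < k) (hγ : 0 < γ)
    (hs : 0 ≤ s) : IntegrableOn (fun x => exp (-(s * x)) * fcDensity L k γ x) (Ioi 0) :=
  (((integrable_gammaMixture hL hk (div_pos hk hγ) hs).integral_prod_right).const_mul _).congr
    (exp_neg_mul_mul_fcDensity_ae_eq hk hγ).symm

theorem integral_exp_neg_mul_mul_fcDensity (hL : 0 < L) (hk : 0 < k) (hγ : 0 < γ)
    (hs : 0 ≤ s) :
    ∫ x in Ioi 0, exp (-(s * x)) * fcDensity L k γ x =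
      (k / γ) ^ k / Gamma L * ∫ t in Ioi 0, t ^ (L - 1) * exp (-t) * (s * t + k / γ) ^ (-k) := by
  rw [integral_congr_ae (exp_neg_mul_mul_fcDensity_ae_eq hk hγ), integral_const_mul,
    ← integral_integral_swap (integrable_gammaMixture hL hk (div_pos hk hγ) hs),
    setIntegral_congr_fun measurableSet_Ioi
      fun t ht => integral_gammaMixture_inner L hk (div_pos hk hγ) hs ht,
    integral_const_mul, ← mul_assoc]
  congr 1
  field_simp [(Gamma_pos_of_pos hk).ne']

theorem integral_fcDensity (hL : 0 < L) (hk : 0 < k) (hγ : 0 < γ) :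
    ∫ x in Ioi 0, fcDensity L k γ x = 1 := by
  have h := integral_exp_neg_mul_mul_fcDensity hL hk hγ le_rfl
  simp only [zero_mul, neg_zero, exp_zero, one_mul, zero_add] at h
  have hΓ : ∫ t in Ioi 0, t ^ (L - 1) * exp (-t) = Gamma L := by
    simp_rw [Gamma_eq_integral hL, mul_comm]
  rw [h, integral_mul_const, hΓ, rpow_neg (div_pos hk hγ).le]
  field_simp [(Gamma_pos_of_pos hL).ne', (rpow_pos_of_pos (div_pos hk hγ) k).ne']

theorem integral_exp_neg_mul_mul_fcDensity_eq_whittakerW (hL : 0 < L) (hk : 0 < k)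
    (hγ : 0 < γ) (hs : 0 < s) :
    ∫ x in Ioi 0, exp (-(s * x)) * fcDensity L k γ x =
      (k / (γ * s)) ^ ((L + k - 1) / 2) * exp (k / (γ * s) / 2) *
        whittakerW ((1 - L - k) / 2) ((L - k) / 2) (k / (γ * s)) := by
  have ha : 0 < k / γ := div_pos hk hγ
  rw [rpow_mul_exp_mul_whittakerW L k (by positivity),
    integral_exp_neg_mul_mul_fcDensity hL hk hγ hs.le, div_mul_eq_mul_div, mul_comm,
    ← integral_mul_const]
  congr 1
  refine setIntegral_congr_fun measurableSet_Ioi fun t ht => ?_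
  have ht : 0 < t := ht
  have hbase : 1 + t / (k / (γ * s)) = (s * t + k / γ) / (k / γ) := by field_simp; ring
  rw [hbase, div_rpow (by positivity) ha.le, rpow_neg ha.le, div_inv_eq_mul]
  ring

end Laplace

theorem integral_one_sub_exp_pow_mul {μ : Measure ℝ} {f : ℝ → ℝ} (c : ℝ) (N : ℕ)
    (hf : ∀ n : ℕ, Integrable (fun x => exp (-(n * c * x)) * f x) μ) :
    ∫ x, (1 - exp (-(1 + x) * c)) ^ N * f x ∂μ =
      ∑ n ∈ Finset.range (N + 1),
        (-1) ^ n * N.choose n * exp (-(n * c)) * ∫ x, exp (-(n * c * x)) * f x ∂μ := by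
  have hexpand : ∀ x, (1 - exp (-(1 + x) * c)) ^ N * f x = ∑ n ∈ Finset.range (N + 1),
      (-1) ^ n * N.choose n * exp (-(n * c)) * (exp (-(n * c * x)) * f x) := by
    intro x
    rw [sub_eq_neg_add, add_pow, Finset.sum_mul]
    refine Finset.sum_congr rfl fun n _ => ?_
    rw [one_pow, neg_pow, ← exp_nat_mul,
      show n * (-(1 + x) * c) = -(n * c) + -(n * c * x) by ring, exp_add]
    ring
  simp_rw [hexpand]
  rw [integral_finsetSum _ fun n _ => (hf n).const_mul _]
  simp_rw [integral_const_mul]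

theorem sd_snr_based_sinr_cdf_general (N : ℕ)
    (γbarD γbarI L k : ℝ) (hD : 0 < γbarD) (hI : 0 < γbarI) (hL : 0 < L) (hk : 0 < k) :
    ∀ γ : ℝ, 0 < γ →
      ∫ x in Ioi (0:ℝ),
          (1 - Real.exp (-(1 + x) * γ / γbarD)) ^ N * fcDensity L k γbarI x =
        1 - ∑ n ∈ Finset.Icc 1 N,
          (N.choose n : ℝ) * (-1 : ℝ) ^ (n + 1) * Real.exp (-(n : ℝ) * γ / γbarD) *
            (k * γbarD / (γbarI * n * γ)) ^ ((L + k - 1) / 2) *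
            Real.exp (k * γbarD / (2 * γbarI * n * γ)) *
            whittakerW ((1 - L - k) / 2) ((L - k) / 2) (k * γbarD / (γbarI * n * γ)) := by
  intro γ hγ
  have hexponent : ∀ x : ℝ, -(1 + x) * γ / γbarD = -(1 + x) * (γ / γbarD) :=
    fun x => mul_div_assoc _ _ _
  simp_rw [hexponent]
  rw [integral_one_sub_exp_pow_mul _ N fun n => integrableOn_exp_neg_mul_mul_fcDensity hL hk hI
      (by positivity), Finset.range_eq_Ico, Finset.sum_eq_sum_Ico_succ_bot N.succ_pos,
    zero_add, Nat.succ_eq_add_one, Finset.Ico_add_one_right_eq_Icc, sub_eq_add_neg,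
    ← Finset.sum_neg_distrib]
  simp only [Nat.cast_zero, zero_mul, neg_zero, exp_zero, pow_zero, Nat.choose_zero_right,
    Nat.cast_one, mul_one, one_mul, integral_fcDensity hL hk hI]
  refine congrArg _ (Finset.sum_congr rfl fun n hn => ?_)
  have hn : (0 : ℝ) < n := by exact_mod_cast (Finset.mem_Icc.mp hn).1
  rw [integral_exp_neg_mul_mul_fcDensity_eq_whittakerW hL hk hI (by positivity),
    show k / (γbarI * (n * (γ / γbarD))) = k * γbarD / (γbarI * n * γ) by field_simp]
  ring_nf

/-- CDF of the SINR-output of SNR-based selection diversity with `N` i.i.d. exponential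
(Rayleigh-fading) branches and fully-correlated interference:
`F(γ) = ∫₀^∞ (1-e^{-(1+x)γ/γ̄_D})^N f_{γ_I}(x) dx` equals the closed Whittaker form. -/
theorem sd_snr_based_sinr_cdf (N : ℕ) (hN : 1 ≤ N)
    (γbarD γbarI L k : ℝ) (hD : 0 < γbarD) (hI : 0 < γbarI) (hL : 0 < L) (hk : 0 < k) :
    ∀ γ : ℝ, 0 < γ →
      ∫ x in Ioi (0:ℝ),
          (1 - Real.exp (-(1 + x) * γ / γbarD)) ^ N * fcDensity L k γbarI x =
        1 - ∑ n ∈ Finset.Icc 1 N,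
          (N.choose n : ℝ) * (-1 : ℝ) ^ (n + 1) * Real.exp (-(n : ℝ) * γ / γbarD) *
            (k * γbarD / (γbarI * n * γ)) ^ ((L + k - 1) / 2) *
            Real.exp (k * γbarD / (2 * γbarI * n * γ)) *
            whittakerW ((1 - L - k) / 2) ((L - k) / 2) (k * γbarD / (γbarI * n * γ)) :=
  sd_snr_based_sinr_cdf_general N γbarD γbarI L k hD hI hL hk
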